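/- arXiv:1511.07050 — 4 statements merged into one kernel-verified Lean document; each statement's English description precedes it below -/
import Mathlib

section
/- For a step-up test with critical values (α_i) such that i ↦ α_i/i is non-increasing, under the basic independence model with uniform true p-values, the FDR is non-decreasing as a function of each false-null p-value p_j, j ∈ I_1. -/
open MeasureTheory ProbabilityTheory Finset
open scoped Classical
noncomputable section

/-- `#{i : p i ≤ t}`, i.e. `m·F̂_m(t)`. -/
def countLE {m : ℕ} (p : Fin m → ℝ) (t : ℝ) : ℕ :=
  (Finset.univ.filter (fun i => p i ≤ t)).card

/-- The `i`-th order statistic `p_{i:m}` (for `1 ≤ i ≤ m`), characterized by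
`p_{i:m} ≤ t ↔ i ≤ #{k : p k ≤ t}`. -/
def orderStat {m : ℕ} (p : Fin m → ℝ) (i : ℕ) : ℝ :=
  sInf {t | i ≤ countLE p t}

/-- Step-up rejection number `R = max {j : p_{j:m} ≤ α_j}` (`max ∅ = 0`). -/
def suR {m : ℕ} (α : ℕ → ℝ) (p : Fin m → ℝ) : ℕ :=
  WithBot.unbotD 0 (((Finset.range (m+1)).filter (fun j => 1 ≤ j ∧ orderStat p j ≤ α j)).max)

/-- Step-down rejection number `R = max {j : p_{i:m} ≤ α_i for all i ≤ j}`. -/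
def sdR {m : ℕ} (α : ℕ → ℝ) (p : Fin m → ℝ) : ℕ :=
  WithBot.unbotD 0 (((Finset.range (m+1)).filter
    (fun j => ∀ i ∈ Finset.Icc 1 j, orderStat p i ≤ α i)).max)

/-- FDR `= E[V / max(R,1)]` for rejection number `R` and rejection rule `rej`. -/
def FDR {Ω : Type*} [MeasurableSpace Ω] (μ : Measure Ω) {m : ℕ}
    (p : Ω → Fin m → ℝ) (I0 : Finset (Fin m))
    (R : (Fin m → ℝ) → ℕ) (rej : (Fin m → ℝ) → Fin m → Prop) : ℝ :=
  ∫ ω, ((I0.filter (fun i => rej (p ω) i)).card : ℝ) / (max (R (p ω)) 1 : ℕ) ∂μ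

/-- FDR of the step-up test with critical values `α`. -/
def suFDR {Ω : Type*} [MeasurableSpace Ω] (μ : Measure Ω) {m : ℕ}
    (α : ℕ → ℝ) (p : Ω → Fin m → ℝ) (I0 : Finset (Fin m)) : ℝ :=
  FDR μ p I0 (suR α) (fun q i => q i ≤ α (suR α q))

/-- FDR of the step-down test with critical values `α`
(rejecting the hypotheses belonging to `p_{i:m}`, `i ≤ R`). -/
def sdFDR {Ω : Type*} [MeasurableSpace Ω] (μ : Measure Ω) {m : ℕ}
    (α : ℕ → ℝ) (p : Ω → Fin m → ℝ) (I0 : Finset (Fin m)) : ℝ :=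
  FDR μ p I0 (sdR α) (fun q i => 1 ≤ sdR α q ∧ q i ≤ orderStat q (sdR α q))

/-- Benjamini–Hochberg critical values `b_j = jα/m`. -/
def bh (m : ℕ) (α : ℝ) (j : ℕ) : ℝ := j * α / m

/-- The uniform distribution on `[0,1]`. -/
def unif01 : Measure ℝ := volume.restrict (Set.Icc 0 1)

/-!
Write `p⁽ⁱ⁾` for `p` with its `i`-th coordinate replaced by `0`. The step-up rejection number `R`
is antitone in the p-values, so for monotone critical values a true null `i` is rejected iff
`pᵢ ≤ α_{R(p⁽ⁱ⁾)}`, and then `R(p) = R(p⁽ⁱ⁾)`. Hence the false discovery proportion is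
`∑_{i ∈ I₀} 1{pᵢ ≤ α_{R(p⁽ⁱ⁾)}} / R(p⁽ⁱ⁾)`, and since `pᵢ` is uniform and independent of `p⁽ⁱ⁾`,
the `i`-th expectation is `E[α_{R(p⁽ⁱ⁾)} / R(p⁽ⁱ⁾)]`. Enlarging a false-null p-value can only
lower each `R(p⁽ⁱ⁾)`, and `r ↦ α_r / r` is non-increasing.
-/

section StepUp

variable {m : ℕ}

lemma countLE_mono (p : Fin m → ℝ) : Monotone (countLE p) := fun _ _ hst =>
  card_le_card (monotone_filter_right _ fun _ _ hk => hk.trans hst)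

lemma countLE_le_countLE {p q : Fin m → ℝ} {t : ℝ} (h : ∀ k, p k ≤ t → q k ≤ t) :
    countLE p t ≤ countLE q t :=
  card_le_card (monotone_filter_right _ fun k _ => h k)

lemma isClosed_setOf_le_countLE (p : Fin m → ℝ) (i : ℕ) : IsClosed {t | i ≤ countLE p t} := by
  have : {t | i ≤ countLE p t} =
      ⋃ s ∈ {s : Finset (Fin m) | s.card = i}, ⋂ k ∈ s, Set.Ici (p k) := by
    ext t
    simp only [Set.mem_ofPred_eq, Set.mem_iUnion, Set.mem_iInter, Set.mem_Ici, exists_prop]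
    constructor
    · intro h
      obtain ⟨s, hs, hcard⟩ := exists_subset_card_eq h
      exact ⟨s, hcard, fun k hk => (mem_filter.mp (hs hk)).2⟩
    · rintro ⟨s, rfl, hs⟩
      exact card_le_card fun k hk => mem_filter.mpr ⟨mem_univ k, hs k hk⟩
  rw [this]
  exact (Set.toFinite _).isClosed_biUnion fun s _ => isClosed_biInter fun k _ => isClosed_Ici

lemma orderStat_le_iff {p : Fin m → ℝ} {i : ℕ} (hi : 1 ≤ i) (him : i ≤ m) (t : ℝ) :
    orderStat p i ≤ t ↔ i ≤ countLE p t := by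
  obtain ⟨M, hM⟩ := (Set.finite_range p).bddAbove
  obtain ⟨L, hL⟩ := (Set.finite_range p).bddBelow
  have hne : {t | i ≤ countLE p t}.Nonempty := by
    refine ⟨M, ?_⟩
    rw [Set.mem_ofPred_eq, countLE, filter_true_of_mem fun k _ => hM (Set.mem_range_self k)]
    simpa using him
  have hbdd : BddBelow {t | i ≤ countLE p t} := by
    refine ⟨L, fun t (ht : i ≤ countLE p t) => ?_⟩
    obtain ⟨k, hk⟩ := card_pos.mp (hi.trans ht)
    exact (hL (Set.mem_range_self k)).trans (mem_filter.mp hk).2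
  have hmem := (isClosed_setOf_le_countLE p i).csInf_mem hne hbdd
  exact ⟨fun h => hmem.trans (countLE_mono p h), fun h => csInf_le hbdd h⟩

lemma le_unbotD_max {β : Type*} [LinearOrder β] {s : Finset β} {a : β} (d : β) (h : a ∈ s) :
    a ≤ s.max.unbotD d :=
  WithBot.le_unbotD (le_max h)

lemma unbotD_max_mem {β : Type*} [LinearOrder β] {s : Finset β} {d : β}
    (h : s.max.unbotD d ≠ d) : s.max.unbotD d ∈ s := by
  cases hs : s.max with
  | bot => simp [hs] at h
  | coe b => simpa using mem_of_max hs

lemma suR_le (α : ℕ → ℝ) (p : Fin m → ℝ) : suR α p ≤ m := by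
  by_cases h : suR α p = 0
  · omega
  · exact Nat.lt_succ_iff.mp (mem_range.mp (mem_filter.mp (unbotD_max_mem h)).1)

lemma le_suR_iff {α : ℕ → ℝ} {p : Fin m → ℝ} {j : ℕ} (hj : 1 ≤ j) :
    j ≤ suR α p ↔ ∃ k, j ≤ k ∧ k ≤ m ∧ k ≤ countLE p (α k) := by
  constructor
  · intro h
    obtain ⟨hr, hr1, hle⟩ := mem_filter.mp (unbotD_max_mem (show suR α p ≠ 0 by omega))
    exact ⟨suR α p, h, suR_le α p, (orderStat_le_iff hr1 (suR_le α p) _).mp hle⟩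
  · rintro ⟨k, hjk, hkm, hk⟩
    refine hjk.trans (le_unbotD_max 0 (mem_filter.mpr ⟨mem_range.mpr (by omega), by omega, ?_⟩))
    exact (orderStat_le_iff (by omega) hkm _).mpr hk

lemma suR_le_countLE {α : ℕ → ℝ} {p : Fin m → ℝ} (h : 1 ≤ suR α p) :
    suR α p ≤ countLE p (α (suR α p)) := by
  obtain ⟨k, hk, hkm, hcount⟩ := (le_suR_iff h).mp le_rfl
  obtain rfl : k = suR α p :=
    le_antisymm ((le_suR_iff (h.trans hk)).mpr ⟨k, le_rfl, hkm, hcount⟩) hk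
  exact hcount

lemma suR_antitone (α : ℕ → ℝ) : Antitone (suR (m := m) α) := by
  intro p q hpq
  rcases Nat.eq_zero_or_pos (suR α q) with h | h
  · omega
  · obtain ⟨k, hk, hkm, hcount⟩ := (le_suR_iff h).mp le_rfl
    exact (le_suR_iff h).mpr
      ⟨k, hk, hkm, hcount.trans (countLE_le_countLE fun l hl => (hpq l).trans hl)⟩

lemma one_le_suR {α : ℕ → ℝ} {p : Fin m → ℝ} {i : Fin m} (hi : p i ≤ α 1) : 1 ≤ suR α p :=
  (le_suR_iff le_rfl).mpr ⟨1, le_rfl, i.pos, card_pos.mpr ⟨i, mem_filter.mpr ⟨mem_univ i, hi⟩⟩⟩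

lemma measurable_countLE (t : ℝ) : Measurable fun p : Fin m → ℝ => countLE p t := by
  simp_rw [countLE, card_filter]
  exact Finset.measurable_sum _ fun k _ => Measurable.ite
    (measurableSet_le (measurable_pi_apply k) measurable_const) measurable_const measurable_const

lemma measurable_suR (α : ℕ → ℝ) : Measurable (suR (m := m) α) := by
  refine measurable_of_Ici fun j => ?_
  rcases Nat.eq_zero_or_pos j with rfl | hj
  · simp
  have : suR α ⁻¹' Set.Ici j = ⋃ k ∈ Set.Icc j m, {p : Fin m → ℝ | k ≤ countLE p (α k)} := by
    ext p
    simp [le_suR_iff hj, and_assoc]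
  rw [this]
  exact (Set.toFinite _).measurableSet_biUnion fun k _ => measurable_countLE _ measurableSet_Ici

lemma suR_eq_suR_update_zero {α : ℕ → ℝ} {x : Fin m → ℝ} {i : Fin m} (hx : 0 ≤ x i)
    (h : x i ≤ α (suR α (Function.update x i 0))) :
    suR α x = suR α (Function.update x i 0) := by
  refine le_antisymm (suR_antitone α (update_le_self_iff.mpr hx)) ?_
  rcases Nat.eq_zero_or_pos (suR α (Function.update x i 0)) with h0 | h0
  · omega
  refine (le_suR_iff h0).mpr ⟨_, le_rfl, suR_le α _,
    (suR_le_countLE h0).trans (countLE_le_countLE fun k hk => ?_)⟩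
  rcases eq_or_ne k i with rfl | hki
  · exact h
  · simpa [Function.update_of_ne hki] using hk

lemma le_crit_suR_iff_update_zero {α : ℕ → ℝ} (hmono : Monotone α) {x : Fin m → ℝ} {i : Fin m}
    (hx : 0 ≤ x i) : x i ≤ α (suR α x) ↔ x i ≤ α (suR α (Function.update x i 0)) :=
  ⟨fun h => h.trans (hmono (suR_antitone α (update_le_self_iff.mpr hx))),
    fun h => by rwa [suR_eq_suR_update_zero hx h]⟩

lemma one_le_suR_update_zero {α : ℕ → ℝ} (hα1 : 0 < α 1) (x : Fin m → ℝ) (i : Fin m) :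
    1 ≤ suR α (Function.update x i 0) :=
  one_le_suR (i := i) (by simpa using hα1.le)

lemma fdp_eq_sum_update_zero {α : ℕ → ℝ} (hmono : Monotone α) (hα1 : 0 < α 1)
    (I0 : Finset (Fin m)) {x : Fin m → ℝ} (hx : 0 ≤ x) :
    ((I0.filter fun i => x i ≤ α (suR α x)).card : ℝ) / ((max (suR α x) 1 : ℕ) : ℝ) =
      ∑ i ∈ I0, (if x i ≤ α (suR α (Function.update x i 0)) then 1 else 0) *
        (suR α (Function.update x i 0) : ℝ)⁻¹ := by
  rw [card_filter, Nat.cast_sum, sum_div]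
  refine sum_congr rfl fun i _ => ?_
  by_cases h : x i ≤ α (suR α (Function.update x i 0))
  · have hR := suR_eq_suR_update_zero (hx i) h
    rw [if_pos ((le_crit_suR_iff_update_zero hmono (hx i)).mpr h), if_pos h, hR,
      max_eq_left (one_le_suR_update_zero hα1 x i), Nat.cast_one, one_div, one_mul]
  · rw [if_neg (mt (le_crit_suR_iff_update_zero hmono (hx i)).mp h), if_neg h, Nat.cast_zero,
      zero_div, zero_mul]

end StepUp

lemma indep_sup_right_of_indep_of_indep_sup {Ω : Type*} {mΩ : MeasurableSpace Ω} {μ : Measure Ω}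
    [IsZeroOrProbabilityMeasure μ] {m₁ m₂ m₃ : MeasurableSpace Ω}
    (h₁ : m₁ ≤ mΩ) (h₂ : m₂ ≤ mΩ) (h₃ : m₃ ≤ mΩ)
    (h₁₂ : Indep m₁ m₂ μ) (h : Indep (m₁ ⊔ m₂) m₃ μ) : Indep m₁ (m₂ ⊔ m₃) μ := by
  let π : Set (Set Ω) := Set.image2 (· ∩ ·) {B | MeasurableSet[m₂] B} {C | MeasurableSet[m₃] C}
  have hπ : IsPiSystem π := by
    rintro _ ⟨B, hB, C, hC, rfl⟩ _ ⟨B', hB', C', hC', rfl⟩ -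
    exact ⟨B ∩ B', hB.inter hB', C ∩ C', hC.inter hC', Set.inter_inter_inter_comm ..⟩
  have hgen : m₂ ⊔ m₃ = MeasurableSpace.generateFrom π := by
    refine le_antisymm (sup_le (fun B hB => ?_) (fun C hC => ?_))
      (MeasurableSpace.generateFrom_le ?_)
    · exact MeasurableSpace.measurableSet_generateFrom ⟨B, hB, Set.univ, .univ, Set.inter_univ B⟩
    · exact MeasurableSpace.measurableSet_generateFrom ⟨Set.univ, .univ, C, hC, Set.univ_inter C⟩
    · rintro _ ⟨B, hB, C, hC, rfl⟩
      exact (le_sup_left (a := m₂) (b := m₃) _ hB).inter (le_sup_right (a := m₂) (b := m₃) _ hC)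
  refine IndepSets.indep h₁ (sup_le h₂ h₃) (@MeasurableSpace.isPiSystem_measurableSet Ω m₁) hπ
    (@MeasurableSpace.generateFrom_measurableSet Ω m₁).symm hgen ?_
  rw [IndepSets_iff]
  rintro A _ hA ⟨B, hB, C, hC, rfl⟩
  have hAB : MeasurableSet[m₁ ⊔ m₂] (A ∩ B) :=
    (le_sup_left (a := m₁) (b := m₂) _ hA).inter (le_sup_right (a := m₁) (b := m₂) _ hB)
  have h₂₃ : Indep m₂ m₃ μ := indep_of_indep_of_le_left h le_sup_right
  calc μ (A ∩ (B ∩ C)) = μ (A ∩ B) * μ C := by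
        rw [← Set.inter_assoc, (Indep_iff _ _ _).mp h _ _ hAB hC]
    _ = μ A * μ (B ∩ C) := by
        rw [(Indep_iff _ _ _).mp h₁₂ _ _ hA hB, (Indep_iff _ _ _).mp h₂₃ _ _ hB hC, mul_assoc]

lemma indepFun_apply_update {Ω ι β : Type*} {mΩ : MeasurableSpace Ω} [MeasurableSpace β]
    [DecidableEq ι] {μ : Measure Ω} [IsZeroOrProbabilityMeasure μ] {s : Finset ι} {x : Ω → ι → β}
    (hx : ∀ k, Measurable fun ω => x ω k)
    (hsep : IndepFun (fun ω (k : {k // k ∈ s}) => x ω k) (fun ω (k : {k // k ∉ s}) => x ω k) μ)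
    (hind : iIndepFun (fun (k : {k // k ∈ s}) ω => x ω k.1) μ) {i : ι} (hi : i ∈ s) (a : β) :
    IndepFun (fun ω => x ω i) (fun ω => Function.update (x ω) i a) μ := by
  -- `x i` is independent of `(x k)_{k ∈ s \ {i}}`, the pair is independent of `(x k)_{k ∉ s}`,
  -- and the update is measurable with respect to the last two.
  let 𝓕 : ι → MeasurableSpace Ω := fun k => MeasurableSpace.comap (fun ω => x ω k) inferInstance
  let i' : {k // k ∈ s} := ⟨i, hi⟩
  have h𝓕 : ∀ k, 𝓕 k ≤ mΩ := fun k => (hx k).comap_le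
  have h₁₂ : Indep (𝓕 i) (⨆ k ∈ ({i'}ᶜ : Set _), 𝓕 k) μ := by
    simpa only [_root_.iSup_singleton] using indep_iSup_of_disjoint (fun k => h𝓕 k.1)
      ((iIndepFun_iff_iIndep _ _ _).mp hind) (disjoint_compl_right (a := {i'}))
  have h₁₂₃ : Indep (𝓕 i ⊔ ⨆ k ∈ ({i'}ᶜ : Set _), 𝓕 k)
      (MeasurableSpace.comap (fun ω (k : {k // k ∉ s}) => x ω k) inferInstance) μ := by
    have hcoord : ∀ k : {k // k ∈ s}, 𝓕 k ≤
        MeasurableSpace.comap (fun ω (l : {k // k ∈ s}) => x ω l) inferInstance := fun k =>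
      Measurable.comap_le ((measurable_pi_apply k).comp
        (comap_measurable fun ω (l : {k // k ∈ s}) => x ω l))
    exact indep_of_indep_of_le_left ((IndepFun_iff_Indep _ _ _).mp hsep)
      (sup_le (hcoord i') (iSup₂_le fun k _ => hcoord k))
  have hM₃ : MeasurableSpace.comap (fun ω (k : {k // k ∉ s}) => x ω k) inferInstance ≤ mΩ :=
    (measurable_pi_lambda _ fun (k : {k // k ∉ s}) => hx k.1).comap_le
  have key := indep_sup_right_of_indep_of_indep_sup (h𝓕 i)
    (iSup₂_le fun (k : {k // k ∈ s}) _ => h𝓕 k.1) hM₃ h₁₂ h₁₂₃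
  refine (IndepFun_iff_Indep _ _ _).mpr (indep_of_indep_of_le_right key ?_)
  refine Measurable.comap_le (@measurable_pi_lambda _ _ _ (_) _ _ fun k => ?_)
  rcases eq_or_ne k i with rfl | hk
  · simp
  simp only [Function.update_of_ne hk]
  by_cases hks : k ∈ s
  · have hk' : (⟨k, hks⟩ : {k // k ∈ s}) ∈ ({i'}ᶜ : Set _) := by simpa [i'] using hk
    exact (comap_measurable _).mono (le_sup_of_le_left (le_iSup₂_of_le _ hk' le_rfl)) le_rfl
  · exact ((measurable_pi_apply (⟨k, hks⟩ : {k // k ∉ s})).comp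
      (comap_measurable fun ω (l : {k // k ∉ s}) => x ω l)).mono le_sup_right le_rfl

instance isProbabilityMeasure_unif01 : IsProbabilityMeasure unif01 := ⟨by simp [unif01]⟩

lemma integral_unif01_ite_le {c : ℝ} (hc : c ∈ Set.Icc (0 : ℝ) 1) :
    ∫ u, (if u ≤ c then (1 : ℝ) else 0) ∂unif01 = c := by
  have hind : (fun u => if u ≤ c then (1 : ℝ) else 0) = (Set.Iic c).indicator 1 := by
    ext u
    simp [Set.indicator_apply]
  have hset : Set.Iic c ∩ Set.Icc 0 1 = Set.Icc 0 c := by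
    ext u
    simp only [Set.mem_inter_iff, Set.mem_Iic, Set.mem_Icc]
    constructor
    · exact fun h => ⟨h.2.1, h.1⟩
    · exact fun h => ⟨h.2, h.1, h.2.trans hc.2⟩
  rw [hind, integral_indicator_one measurableSet_Iic, measureReal_def, unif01,
    Measure.restrict_apply measurableSet_Iic, hset, Real.volume_Icc, sub_zero,
    ENNReal.toReal_ofReal hc.1]

lemma integral_ite_le_mul_eq {Ω β : Type*} [MeasurableSpace Ω] [MeasurableSpace β]
    {μ : Measure Ω} [IsProbabilityMeasure μ] {U : Ω → ℝ} {W : Ω → β} (hU : Measurable U)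
    (hW : Measurable W) (hUW : IndepFun U W μ) (hunif : μ.map U = unif01) {c g : β → ℝ}
    (hc : Measurable c) (hc01 : ∀ ω, c (W ω) ∈ Set.Icc (0 : ℝ) 1) (hg : Integrable g (μ.map W)) :
    ∫ ω, (if U ω ≤ c (W ω) then 1 else 0) * g (W ω) ∂μ = ∫ ω, c (W ω) * g (W ω) ∂μ := by
  have hF : Integrable (fun z : ℝ × β => (if z.1 ≤ c z.2 then 1 else 0) * g z.2)
      (unif01.prod (μ.map W)) := by
    refine (hg.comp_snd unif01).mono ?_ (Filter.Eventually.of_forall fun z => ?_)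
    · exact (Measurable.ite (measurableSet_le measurable_fst (hc.comp measurable_snd))
        measurable_const measurable_const).aestronglyMeasurable.mul hg.1.comp_snd
    · split_ifs <;> simp
  have hlaw : μ.map (fun ω => (U ω, W ω)) = unif01.prod (μ.map W) := by
    rw [← hunif]
    exact (indepFun_iff_map_prod_eq_prod_map_map hU.aemeasurable hW.aemeasurable).mp hUW
  have hc01' : ∀ᵐ w ∂(μ.map W), c w ∈ Set.Icc (0 : ℝ) 1 :=
    (ae_map_iff hW.aemeasurable (measurableSet_Icc.preimage hc)).mpr (ae_of_all _ hc01)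
  calc ∫ ω, (if U ω ≤ c (W ω) then 1 else 0) * g (W ω) ∂μ
      = ∫ z, (if z.1 ≤ c z.2 then 1 else 0) * g z.2 ∂(unif01.prod (μ.map W)) := by
        rw [← hlaw, integral_map (hU.prodMk hW).aemeasurable (hlaw ▸ hF.1)]
    _ = ∫ w, c w * g w ∂(μ.map W) := by
        rw [integral_prod_symm _ hF]
        refine integral_congr_ae (hc01'.mono fun w hw => ?_)
        simp only [integral_mul_const, integral_unif01_ite_le hw]
    _ = ∫ ω, c (W ω) * g (W ω) ∂μ :=
        integral_map hW.aemeasurable ((hc.aestronglyMeasurable).mul hg.1)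

lemma integrable_comp_of_le {Ω : Type*} [MeasurableSpace Ω] {μ : Measure Ω} [IsFiniteMeasure μ]
    {N : Ω → ℕ} (hN : Measurable N) {n : ℕ} (hNn : ∀ ω, N ω ≤ n) (f : ℕ → ℝ) :
    Integrable (fun ω => f (N ω)) μ :=
  Integrable.of_bound (measurable_from_nat.comp hN).aestronglyMeasurable
    (∑ r ∈ range (n + 1), ‖f r‖)
    (ae_of_all _ fun ω => single_le_sum (f := fun r => ‖f r‖) (fun _ _ => norm_nonneg _)
      (mem_range.mpr (Nat.lt_succ_of_le (hNn ω))))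

lemma suFDR_eq_sum_integral {Ω : Type*} [MeasurableSpace Ω] {μ : Measure Ω}
    [IsProbabilityMeasure μ] {m : ℕ} {α : ℕ → ℝ} (hα1 : 0 < α 1) (hmono : Monotone α)
    (hαm : α m < 1) {I0 : Finset (Fin m)} {x : Ω → Fin m → ℝ}
    (hmeas : ∀ i, Measurable fun ω => x ω i) (hx : ∀ ω, 0 ≤ x ω)
    (hsep : IndepFun (fun ω (i : {i // i ∈ I0}) => x ω i) (fun ω (i : {i // i ∉ I0}) => x ω i) μ)
    (hind : iIndepFun (fun (i : {i // i ∈ I0}) ω => x ω i.1) μ)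
    (hunif : ∀ i ∈ I0, μ.map (fun ω => x ω i) = unif01) :
    suFDR μ α x I0 = ∑ i ∈ I0, ∫ ω, α (suR α (Function.update (x ω) i 0)) /
      (suR α (Function.update (x ω) i 0) : ℝ) ∂μ := by
  have hW : ∀ i, Measurable fun ω => Function.update (x ω) i 0 := fun i =>
    measurable_update_left.comp (measurable_pi_lambda _ hmeas)
  have hc : Measurable fun w : Fin m → ℝ => α (suR α w) :=
    measurable_from_nat.comp (measurable_suR α)
  have hg : ∀ i, Integrable (fun w : Fin m → ℝ => (suR α w : ℝ)⁻¹)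
      (μ.map fun ω => Function.update (x ω) i 0) := fun _ =>
    integrable_comp_of_le (measurable_suR α) (suR_le α) fun r => (r : ℝ)⁻¹
  have hc01 : ∀ ω i, α (suR α (Function.update (x ω) i 0)) ∈ Set.Icc (0 : ℝ) 1 := fun ω i =>
    ⟨hα1.le.trans (hmono (one_le_suR_update_zero hα1 _ i)), (hmono (suR_le α _)).trans hαm.le⟩
  calc suFDR μ α x I0
      = ∫ ω, ∑ i ∈ I0, (if x ω i ≤ α (suR α (Function.update (x ω) i 0)) then 1 else 0) *
          (suR α (Function.update (x ω) i 0) : ℝ)⁻¹ ∂μ :=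
        integral_congr_ae (ae_of_all _ fun ω => fdp_eq_sum_update_zero hmono hα1 I0 (hx ω))
    _ = ∑ i ∈ I0, ∫ ω, (if x ω i ≤ α (suR α (Function.update (x ω) i 0)) then 1 else 0) *
          (suR α (Function.update (x ω) i 0) : ℝ)⁻¹ ∂μ := by
        refine integral_finsetSum _ fun i _ =>
          ((hg i).comp_measurable (hW i)).bdd_mul (c := 1) ?_ ?_
        · exact (Measurable.ite (measurableSet_le (hmeas i) (hc.comp (hW i))) measurable_const
            measurable_const).aestronglyMeasurable
        · exact ae_of_all _ fun ω => by split_ifs <;> simp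
    _ = _ := by
        simp_rw [div_eq_mul_inv]
        exact sum_congr rfl fun i hi => integral_ite_le_mul_eq (hmeas i) (hW i)
          (indepFun_apply_update hmeas hsep hind hi 0) (hunif i hi) hc (fun ω => hc01 ω i) (hg i)

lemma integrable_crit_div_suR_update_zero {Ω : Type*} [MeasurableSpace Ω] {μ : Measure Ω}
    [IsFiniteMeasure μ] {m : ℕ} (α : ℕ → ℝ) {x : Ω → Fin m → ℝ}
    (hx : ∀ i, Measurable fun ω => x ω i) (i : Fin m) :
    Integrable (fun ω => α (suR α (Function.update (x ω) i 0)) /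
      (suR α (Function.update (x ω) i 0) : ℝ)) μ :=
  integrable_comp_of_le
    ((measurable_suR α).comp (measurable_update_left.comp (measurable_pi_lambda _ hx)))
    (fun _ => suR_le α _) fun r => α r / r

lemma crit_div_suR_le_of_le {m : ℕ} {α : ℕ → ℝ}
    (hratio : ∀ i j : ℕ, 1 ≤ i → i ≤ j → j ≤ m → α j / j ≤ α i / i) {x y : Fin m → ℝ}
    (hxy : x ≤ y) (hy : 1 ≤ suR α y) : α (suR α x) / suR α x ≤ α (suR α y) / suR α y :=
  hratio _ _ hy (suR_antitone α hxy) (suR_le α x)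

theorem su_fdr_monotone_in_false_pvalues_general
    {Ω : Type*} [MeasurableSpace Ω] (μ : Measure Ω) [IsProbabilityMeasure μ]
    (m : ℕ) (α : ℕ → ℝ)
    (hα1 : 0 < α 1) (hmono : Monotone α) (hαm : α m < 1)
    -- `i ↦ α_i/i` is non-increasing
    (hratio : ∀ i j : ℕ, 1 ≤ i → i ≤ j → j ≤ m → α j / j ≤ α i / i)
    (I0 : Finset (Fin m)) (p q : Ω → Fin m → ℝ) (j : Fin m) (hj : j ∉ I0)
    (hmeasp : ∀ i, Measurable (fun ω => p ω i))
    (hmeasq : ∀ i, Measurable (fun ω => q ω i))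
    (hrangep : ∀ ω i, p ω i ∈ Set.Icc (0:ℝ) 1)
    (hrangeq : ∀ ω i, q ω i ∈ Set.Icc (0:ℝ) 1)
    -- `q` agrees with `p` except in the false-null coordinate `j`, where it is larger
    (hagree : ∀ ω, ∀ i, i ≠ j → q ω i = p ω i)
    (hle : ∀ ω, p ω j ≤ q ω j)
    -- BI with uniform true p-values, for both `p` and `q`
    (hBI2p : IndepFun (fun ω (i : {i // i ∈ I0}) => p ω i)
      (fun ω (i : {i // i ∉ I0}) => p ω i) μ)
    (hBI2q : IndepFun (fun ω (i : {i // i ∈ I0}) => q ω i)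
      (fun ω (i : {i // i ∉ I0}) => q ω i) μ)
    (hBI3 : iIndepFun (fun (i : {i // i ∈ I0}) ω => p ω i.1) μ)
    (hunif : ∀ i ∈ I0, Measure.map (fun ω => p ω i) μ = unif01) :
    suFDR μ α p I0 ≤ suFDR μ α q I0 := by
  have hqp : ∀ i ∈ I0, (fun ω => q ω i) = fun ω => p ω i := fun i hi =>
    funext fun ω => hagree ω i (ne_of_mem_of_not_mem hi hj)
  have hpq : ∀ ω, p ω ≤ q ω := fun ω k => by
    rcases eq_or_ne k j with rfl | hk
    · exact hle ω
    · exact (hagree ω k hk).ge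
  have hBI3q : iIndepFun (fun (i : {i // i ∈ I0}) ω => q ω i.1) μ := by
    rwa [show (fun (i : {i // i ∈ I0}) ω => q ω i.1) = fun i ω => p ω i.1 from
      funext fun i => hqp i.1 i.2]
  rw [suFDR_eq_sum_integral hα1 hmono hαm hmeasp (fun ω i => (hrangep ω i).1) hBI2p hBI3 hunif,
    suFDR_eq_sum_integral hα1 hmono hαm hmeasq (fun ω i => (hrangeq ω i).1) hBI2q hBI3q
      fun i hi => hqp i hi ▸ hunif i hi]
  refine sum_le_sum fun i _ => integral_mono (integrable_crit_div_suR_update_zero α hmeasp i)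
    (integrable_crit_div_suR_update_zero α hmeasq i) fun ω => ?_
  exact crit_div_suR_le_of_le hratio (update_le_update_iff.mpr ⟨le_rfl, fun k _ => hpq ω k⟩)
    (one_le_suR_update_zero hα1 _ i)

/-- If `i ↦ α_i/i` is non-increasing, the FDR of the step-up test
(under the BI model with uniform true p-values) is non-decreasing in each
false-null p-value `p_j`: enlarging the coordinate `j ∈ I1` pointwise can only
increase the FDR. -/
theorem su_fdr_monotone_in_false_pvalues
    {Ω : Type*} [MeasurableSpace Ω] (μ : Measure Ω) [IsProbabilityMeasure μ]
    (m : ℕ) (hm : 1 ≤ m) (α : ℕ → ℝ)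
    (hα0 : α 0 = 0) (hα1 : 0 < α 1) (hmono : Monotone α) (hαm : α m < 1)
    -- `i ↦ α_i/i` is non-increasing
    (hratio : ∀ i j : ℕ, 1 ≤ i → i ≤ j → j ≤ m → α j / j ≤ α i / i)
    (I0 : Finset (Fin m)) (p q : Ω → Fin m → ℝ) (j : Fin m) (hj : j ∉ I0)
    (hmeasp : ∀ i, Measurable (fun ω => p ω i))
    (hmeasq : ∀ i, Measurable (fun ω => q ω i))
    (hrangep : ∀ ω i, p ω i ∈ Set.Icc (0:ℝ) 1)
    (hrangeq : ∀ ω i, q ω i ∈ Set.Icc (0:ℝ) 1)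
    -- `q` agrees with `p` except in the false-null coordinate `j`, where it is larger
    (hagree : ∀ ω, ∀ i, i ≠ j → q ω i = p ω i)
    (hle : ∀ ω, p ω j ≤ q ω j)
    -- BI with uniform true p-values, for both `p` and `q`
    (hBI2p : IndepFun (fun ω (i : {i // i ∈ I0}) => p ω i)
      (fun ω (i : {i // i ∉ I0}) => p ω i) μ)
    (hBI2q : IndepFun (fun ω (i : {i // i ∈ I0}) => q ω i)
      (fun ω (i : {i // i ∉ I0}) => q ω i) μ)
    (hBI3 : iIndepFun (fun (i : {i // i ∈ I0}) ω => p ω i.1) μ)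
    (hunif : ∀ i ∈ I0, Measure.map (fun ω => p ω i) μ = unif01) :
    suFDR μ α p I0 ≤ suFDR μ α q I0 :=
  su_fdr_monotone_in_false_pvalues_general μ m α hα1 hmono hαm hratio I0 p q j hj hmeasp hmeasq
    hrangep hrangeq hagree hle hBI2p hBI2q hBI3 hunif
end
end

section
/- Let m = 2 and let p_1, p_2 be (arbitrarily dependent) random variables each uniform on [0,1], both true nulls. For the step-up test with critical values 0 < α_1 < α_2 < 1, the FDR satisfies FDR ≤ min(α_1 + α_2, 1). -/
open MeasureTheory ProbabilityTheory Finset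
open scoped Classical
noncomputable section

/-!
Under the global null the false discovery proportion of a step-up test is `0` or `1`, so the FDR
is the probability of at least one rejection. For two p-values a rejection requires
`min p ≤ α₁` or `max p ≤ α₂`, which is covered by `{p₁ ≤ α₁} ∪ {p₂ ≤ α₁} ∪ {α₁ < p₁ ≤ α₂}`.
Each of these events involves a single p-value, so its probability is bounded through the uniform
marginal alone, whatever the dependence: `α₁ + α₁ + (α₂ - α₁)`.
-/

open Set

lemma countLE_two (q : Fin 2 → ℝ) (t : ℝ) :
    countLE q t = (if q 0 ≤ t then 1 else 0) + (if q 1 ≤ t then 1 else 0) := by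
  rw [countLE, Finset.card_filter, Fin.sum_univ_two]

lemma orderStat_two_one (q : Fin 2 → ℝ) : orderStat q 1 = min (q 0) (q 1) := by
  have h : {t | 1 ≤ countLE q t} = Ici (min (q 0) (q 1)) := by
    ext t
    simp only [mem_ofPred_eq, countLE_two, Set.mem_Ici, min_le_iff]
    split_ifs <;> simp_all
  rw [orderStat, h, csInf_Ici]

lemma orderStat_two_two (q : Fin 2 → ℝ) : orderStat q 2 = max (q 0) (q 1) := by
  have h : {t | 2 ≤ countLE q t} = Ici (max (q 0) (q 1)) := by
    ext t
    simp only [mem_ofPred_eq, countLE_two, Set.mem_Ici, max_le_iff]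
    split_ifs <;> simp_all
  rw [orderStat, h, csInf_Ici]

lemma suR_two (α : ℕ → ℝ) (q : Fin 2 → ℝ) :
    suR α q = if max (q 0) (q 1) ≤ α 2 then 2 else if min (q 0) (q 1) ≤ α 1 then 1 else 0 := by
  rw [suR, show Finset.range (2 + 1) = {0, 1, 2} by decide]
  by_cases h2 : max (q 0) (q 1) ≤ α 2 <;> by_cases h1 : min (q 0) (q 1) ≤ α 1 <;>
    simp [Finset.filter_insert, Finset.filter_singleton, orderStat_two_one, orderStat_two_two,
      h1, h2]

lemma countLE_suR_two_le {α : ℕ → ℝ} (hα : α 1 ≤ α 2) {q : Fin 2 → ℝ} (hq : ∀ i, α 0 < q i) :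
    countLE q (α (suR α q)) ≤ suR α q := by
  rw [suR_two]
  split_ifs with h2 h1
  · exact (Finset.card_filter_le _ _).trans (Finset.card_fin 2).le
  · have : ¬ (q 0 ≤ α 1 ∧ q 1 ≤ α 1) := fun h => h2 (max_le (h.1.trans hα) (h.2.trans hα))
    rw [countLE_two]
    split_ifs <;> simp_all
  · simp [countLE_two, not_le.mpr (hq 0), not_le.mpr (hq 1)]

lemma suR_two_ne_zero {α : ℕ → ℝ} {q : Fin 2 → ℝ} (hR : suR α q ≠ 0) :
    q 0 ≤ α 1 ∨ q 1 ≤ α 1 ∨ q 0 ∈ Ioc (α 1) (α 2) := by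
  rw [suR_two] at hR
  by_cases h1 : q 0 ≤ α 1
  · exact Or.inl h1
  split_ifs at hR with h2 h1'
  · exact Or.inr (Or.inr ⟨not_le.mp h1, (le_max_left _ _).trans h2⟩)
  · exact (min_le_iff.mp h1').imp_right Or.inl
  · exact absurd rfl hR

lemma suFDP_two_le_indicator {α : ℕ → ℝ} (hα : α 1 ≤ α 2) {q : Fin 2 → ℝ} (hq : ∀ i, α 0 < q i) :
    ((Finset.univ.filter fun i => q i ≤ α (suR α q)).card : ℝ) / (max (suR α q) 1 : ℕ) ≤
      ({q | q 0 ≤ α 1} ∪ {q | q 1 ≤ α 1} ∪ {q | q 0 ∈ Ioc (α 1) (α 2)}).indicator 1 q := by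
  have hV : countLE q (α (suR α q)) ≤ suR α q := countLE_suR_two_le hα hq
  rw [countLE] at hV
  by_cases hR : suR α q = 0
  · rw [hR] at hV ⊢
    rw [Nat.le_zero.mp hV]
    simp only [Nat.cast_zero, zero_div]
    exact indicator_nonneg (fun _ _ => zero_le_one) q
  · have hmem := suR_two_ne_zero hR
    rw [indicator_of_mem (by simpa only [Set.mem_union, Set.mem_ofPred_eq, or_assoc] using hmem),
      Pi.one_apply, div_le_one (by positivity), max_eq_left (Nat.one_le_iff_ne_zero.mpr hR)]
    exact_mod_cast hV

section UniformMarginal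

variable {Ω : Type*} [MeasurableSpace Ω] {μ : Measure Ω} {X : Ω → ℝ}

lemma measure_preimage_le_of_map_eq_unif01 (hX : AEMeasurable X μ) (hunif : μ.map X = unif01)
    (s : Set ℝ) : μ (X ⁻¹' s) ≤ volume (s ∩ Icc 0 1) :=
  (Measure.le_map_apply hX s).trans_eq <| by
    rw [hunif, unif01, Measure.restrict_apply' measurableSet_Icc]

lemma measure_preimage_Iic_le_of_map_eq_unif01 (hX : AEMeasurable X μ)
    (hunif : μ.map X = unif01) (a : ℝ) : μ (X ⁻¹' Iic a) ≤ ENNReal.ofReal a :=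
  calc μ (X ⁻¹' Iic a) ≤ volume (Iic a ∩ Icc 0 1) :=
        measure_preimage_le_of_map_eq_unif01 hX hunif _
    _ ≤ volume (Icc 0 a) := measure_mono fun _ hx => ⟨hx.2.1, hx.1⟩
    _ = ENNReal.ofReal a := by rw [Real.volume_Icc, sub_zero]

lemma measure_preimage_Ioc_le_of_map_eq_unif01 (hX : AEMeasurable X μ)
    (hunif : μ.map X = unif01) (a b : ℝ) : μ (X ⁻¹' Ioc a b) ≤ ENNReal.ofReal (b - a) :=
  calc μ (X ⁻¹' Ioc a b) ≤ volume (Ioc a b ∩ Icc 0 1) :=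
        measure_preimage_le_of_map_eq_unif01 hX hunif _
    _ ≤ volume (Ioc a b) := measure_mono inter_subset_left
    _ = ENNReal.ofReal (b - a) := Real.volume_Ioc

lemma ae_pos_of_map_eq_unif01 (hX : AEMeasurable X μ) (hunif : μ.map X = unif01) :
    ∀ᵐ ω ∂μ, 0 < X ω := by
  simp only [ae_iff, not_lt]
  exact le_antisymm ((measure_preimage_Iic_le_of_map_eq_unif01 hX hunif 0).trans_eq
    ENNReal.ofReal_zero) bot_le

lemma measureReal_cover_le_of_map_eq_unif01 [IsFiniteMeasure μ] {Y : Ω → ℝ}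
    (hX : AEMeasurable X μ) (hY : AEMeasurable Y μ) (hXu : μ.map X = unif01)
    (hYu : μ.map Y = unif01) {a b : ℝ} (ha : 0 ≤ a) (hab : a ≤ b) :
    μ.real (X ⁻¹' Iic a ∪ Y ⁻¹' Iic a ∪ X ⁻¹' Ioc a b) ≤ a + b := by
  refine ENNReal.toReal_le_of_le_ofReal (by linarith) ?_
  calc μ (X ⁻¹' Iic a ∪ Y ⁻¹' Iic a ∪ X ⁻¹' Ioc a b)
        ≤ μ (X ⁻¹' Iic a) + μ (Y ⁻¹' Iic a) + μ (X ⁻¹' Ioc a b) :=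
          (measure_union_le _ _).trans (add_le_add_left (measure_union_le _ _) _)
    _ ≤ ENNReal.ofReal a + ENNReal.ofReal a + ENNReal.ofReal (b - a) := by
          gcongr
          · exact measure_preimage_Iic_le_of_map_eq_unif01 hX hXu a
          · exact measure_preimage_Iic_le_of_map_eq_unif01 hY hYu a
          · exact measure_preimage_Ioc_le_of_map_eq_unif01 hX hXu a b
    _ = ENNReal.ofReal (a + b) := by
          rw [← ENNReal.ofReal_add ha ha, ← ENNReal.ofReal_add (by linarith) (by linarith)]
          ring_nf

end UniformMarginal

theorem su_two_dependent_bound_general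
    {Ω : Type*} [MeasurableSpace Ω] (μ : Measure Ω) [IsProbabilityMeasure μ]
    (a1 a2 : ℝ) (ha1 : 0 < a1) (h12 : a1 < a2)
    (p : Ω → Fin 2 → ℝ)
    (hmeas : ∀ i, Measurable (fun ω => p ω i))
    -- both p-values uniformly distributed on [0,1] (arbitrary joint dependence)
    (hunif : ∀ i : Fin 2, Measure.map (fun ω => p ω i) μ = unif01) :
    suFDR μ (fun j => if j = 0 then 0 else if j = 1 then a1 else a2) p Finset.univ
      ≤ min (a1 + a2) 1 := by
  set α : ℕ → ℝ := fun j => if j = 0 then 0 else if j = 1 then a1 else a2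
  set S : Set (Fin 2 → ℝ) := {q | q 0 ≤ a1} ∪ {q | q 1 ≤ a1} ∪ {q | q 0 ∈ Ioc a1 a2}
  have hS : MeasurableSet (p ⁻¹' S) :=
    ((measurableSet_le (hmeas 0) measurable_const).union
      (measurableSet_le (hmeas 1) measurable_const)).union (hmeas 0 measurableSet_Ioc)
  have hFDP : ∀ᵐ ω ∂μ, ((Finset.univ.filter fun i => p ω i ≤ α (suR α (p ω))).card : ℝ) /
      (max (suR α (p ω)) 1 : ℕ) ≤ (p ⁻¹' S).indicator 1 ω := by
    filter_upwards [ae_pos_of_map_eq_unif01 (hmeas 0).aemeasurable (hunif 0),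
      ae_pos_of_map_eq_unif01 (hmeas 1).aemeasurable (hunif 1)] with ω h0 h1
    exact suFDP_two_le_indicator (α := α) h12.le (Fin.forall_fin_two.mpr ⟨h0, h1⟩)
  calc suFDR μ α p Finset.univ ≤ ∫ ω, (p ⁻¹' S).indicator 1 ω ∂μ :=
        integral_mono_of_nonneg (.of_forall fun _ => by positivity)
          ((integrable_const 1).indicator hS) hFDP
    _ = μ.real (p ⁻¹' S) := integral_indicator_one hS
    _ ≤ min (a1 + a2) 1 := le_min
        (measureReal_cover_le_of_map_eq_unif01 (hmeas 0).aemeasurable (hmeas 1).aemeasurable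
          (hunif 0) (hunif 1) ha1.le h12.le) measureReal_le_one

/-- For `m = 2`, arbitrarily dependent uniform p-values (both
nulls true) and a step-up test with critical values `0 < α₁ < α₂ < 1`,
`FDR ≤ min(α₁ + α₂, 1)`. -/
theorem su_two_dependent_bound
    {Ω : Type*} [MeasurableSpace Ω] (μ : Measure Ω) [IsProbabilityMeasure μ]
    (a1 a2 : ℝ) (ha1 : 0 < a1) (h12 : a1 < a2) (ha2 : a2 < 1)
    (p : Ω → Fin 2 → ℝ)
    (hmeas : ∀ i, Measurable (fun ω => p ω i))
    -- both p-values uniformly distributed on [0,1] (arbitrary joint dependence)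
    (hunif : ∀ i : Fin 2, Measure.map (fun ω => p ω i) μ = unif01) :
    suFDR μ (fun j => if j = 0 then 0 else if j = 1 then a1 else a2) p Finset.univ
      ≤ min (a1 + a2) 1 :=
  su_two_dependent_bound_general μ a1 a2 ha1 h12 p hmeas hunif
end
end

section
/- The bound FDR ≤ m_0·α/m is attained for both the step-up and step-down Benjamini–Hochberg tests: if p = (U, 0, …, 0) with U uniform on [0,1], m_0 = 1, I_0 = {1}, then FDR = P(U ≤ α)/m = α/m. -/
open MeasureTheory ProbabilityTheory Finset
open scoped Classical
noncomputable section

/-!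
For `p = (u, 0, …, 0)` with `u ≥ 0`, the order statistics are `p_{i:m} = 0` for `i < m` and
`p_{m:m} = u`. Since `b_i ≥ 0` and `b_m = α`, both tests reject everything when `u ≤ α`, so the
false discovery proportion is `1/m`; when `u > α` the true null is never rejected (step-up:
`u > α ≥ b_R`; step-down: `R < m`, so its threshold `p_{R:m}` is `0`). Hence the FDR is
`P(U ≤ α)/m = α/m`.
-/

section UnbotMax

variable {β : Type*} [LinearOrder β] {s : Finset β} {a d : β}

lemma Finset.unbotD_max_eq (ha : a ∈ s) (h : ∀ b ∈ s, b ≤ a) : s.max.unbotD d = a := by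
  rw [le_antisymm (Finset.max_le fun b hb => WithBot.coe_le_coe.2 (h b hb)) (Finset.le_max ha)]
  rfl

lemma Finset.unbotD_max_le (hd : d ≤ a) (h : ∀ b ∈ s, b ≤ a) : s.max.unbotD d ≤ a :=
  (WithBot.unbotD_le_iff fun _ => hd).2 (Finset.max_le fun b hb => WithBot.coe_le_coe.2 (h b hb))

end UnbotMax

section StepTests

variable {m : ℕ}

lemma orderStat_eq_of_isLeast {p : Fin m → ℝ} {i : ℕ} {t : ℝ} (ht : i ≤ countLE p t)
    (hlt : ∀ s < t, countLE p s < i) : orderStat p i = t := by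
  refine IsLeast.csInf_eq ⟨ht, fun s hs => ?_⟩
  by_contra! hst
  exact (hlt s hst).not_ge hs

lemma suR_eq_self {α : ℕ → ℝ} {p : Fin m → ℝ} (hm : 1 ≤ m) (h : orderStat p m ≤ α m) :
    suR α p = m :=
  Finset.unbotD_max_eq (mem_filter.2 ⟨self_mem_range_succ m, hm, h⟩)
    fun _ hj => Nat.lt_succ_iff.1 (mem_range.1 (mem_filter.1 hj).1)

lemma sdR_eq_self {α : ℕ → ℝ} {p : Fin m → ℝ} (h : ∀ i ∈ Icc 1 m, orderStat p i ≤ α i) :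
    sdR α p = m := by
  refine Finset.unbotD_max_eq ?_ fun j hj => ?_
  · simpa only [mem_filter, mem_range] using ⟨Nat.lt_succ_self m, h⟩
  · simp only [mem_filter, mem_range] at hj
    omega

lemma sdR_lt_self {α : ℕ → ℝ} {p : Fin m → ℝ} (hm : 1 ≤ m) (h : α m < orderStat p m) :
    sdR α p < m := by
  have hle : sdR α p ≤ m - 1 := by
    refine Finset.unbotD_max_le (Nat.zero_le _) fun j hj => ?_
    obtain ⟨hjm, hj⟩ := by simpa only [mem_filter, mem_range] using hj
    have hjne : j ≠ m := by
      rintro rfl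
      exact (hj j (mem_Icc.2 ⟨hm, le_rfl⟩)).not_gt h
    omega
  omega

lemma bh_self (hm : 1 ≤ m) (α : ℝ) : bh m α m = α := by
  have : (m : ℝ) ≠ 0 := by positivity
  simp only [bh]
  field_simp

lemma bh_le {α : ℝ} (hα : 0 ≤ α) {j : ℕ} (hj : j ≤ m) : bh m α j ≤ α := by
  rcases Nat.eq_zero_or_pos m with rfl | hm
  · simpa [bh] using hα
  · calc bh m α j ≤ bh m α m := by unfold bh; gcongr
      _ = α := bh_self hm α

end StepTests

def leadVec (m : ℕ) (u : ℝ) : Fin m → ℝ := fun i => if (i : ℕ) = 0 then u else 0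

section LeadVec

variable {m : ℕ} {u t : ℝ}

lemma leadVec_zero (hm : 1 ≤ m) (u : ℝ) : leadVec m u ⟨0, hm⟩ = u := if_pos rfl

lemma leadVec_of_ne_zero {i : Fin m} (hi : (i : ℕ) ≠ 0) : leadVec m u i = 0 := if_neg hi

lemma countLE_leadVec_of_neg (hu : 0 ≤ u) (ht : t < 0) : countLE (leadVec m u) t = 0 := by
  refine card_eq_zero.2 (filter_eq_empty_iff.2 fun i _ => ?_)
  unfold leadVec
  split_ifs <;> linarith

lemma sub_one_le_countLE_leadVec (ht : 0 ≤ t) : m - 1 ≤ countLE (leadVec m u) t := by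
  rcases Nat.eq_zero_or_pos m with rfl | hm
  · exact Nat.zero_le _
  calc m - 1 = (univ.erase (⟨0, hm⟩ : Fin m)).card := by simp
    _ ≤ countLE (leadVec m u) t := card_le_card fun i hi => by
        have hi0 : (i : ℕ) ≠ 0 := fun h => (mem_erase.1 hi).1 (Fin.ext h)
        simpa [leadVec_of_ne_zero hi0] using ht

lemma countLE_leadVec_le_sub_one (hm : 1 ≤ m) (ht : t < u) :
    countLE (leadVec m u) t ≤ m - 1 :=
  calc countLE (leadVec m u) t ≤ (univ.erase (⟨0, hm⟩ : Fin m)).card :=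
        card_le_card fun i hi => mem_erase.2 ⟨by
          rintro rfl
          exact (leadVec_zero hm u ▸ (mem_filter.1 hi).2).not_gt ht, mem_univ i⟩
    _ = m - 1 := by simp

lemma countLE_leadVec_self (hu : 0 ≤ u) : countLE (leadVec m u) u = m := by
  rw [countLE, filter_true_of_mem fun i _ => ?_, card_univ, Fintype.card_fin]
  unfold leadVec
  split_ifs <;> linarith

lemma orderStat_leadVec_of_lt (hu : 0 ≤ u) {i : ℕ} (hi : 1 ≤ i) (him : i < m) :
    orderStat (leadVec m u) i = 0 :=
  orderStat_eq_of_isLeast (by have := sub_one_le_countLE_leadVec (m := m) (u := u) le_rfl; omega)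
    fun _ hs => by rw [countLE_leadVec_of_neg hu hs]; omega

lemma orderStat_leadVec_self (hm : 1 ≤ m) (hu : 0 ≤ u) : orderStat (leadVec m u) m = u :=
  orderStat_eq_of_isLeast (countLE_leadVec_self hu).ge
    fun _ hs => (countLE_leadVec_le_sub_one hm hs).trans_lt (by omega)

end LeadVec

section BHLeadVec

variable {m : ℕ} {u α : ℝ}

lemma suR_bh_leadVec (hm : 1 ≤ m) (hu : 0 ≤ u) (huα : u ≤ α) : suR (bh m α) (leadVec m u) = m :=
  suR_eq_self hm (by rwa [orderStat_leadVec_self hm hu, bh_self hm])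

lemma sdR_bh_leadVec (hm : 1 ≤ m) (hu : 0 ≤ u) (hα : 0 ≤ α) (huα : u ≤ α) :
    sdR (bh m α) (leadVec m u) = m := by
  refine sdR_eq_self fun i hi => ?_
  obtain ⟨hi1, him⟩ := mem_Icc.1 hi
  rcases him.lt_or_eq with him | rfl
  · rw [orderStat_leadVec_of_lt hu hi1 him]
    unfold bh
    positivity
  · rwa [orderStat_leadVec_self hm hu, bh_self hm]

lemma su_bh_rejects_leadVec_iff (hm : 1 ≤ m) (hu : 0 ≤ u) (hα : 0 ≤ α) :
    leadVec m u ⟨0, hm⟩ ≤ bh m α (suR (bh m α) (leadVec m u)) ↔ u ≤ α := by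
  rw [leadVec_zero hm]
  refine ⟨fun h => h.trans (bh_le hα (suR_le _ _)), fun h => ?_⟩
  rwa [suR_bh_leadVec hm hu h, bh_self hm]

lemma sd_bh_rejects_leadVec_iff (hm : 1 ≤ m) (hu : 0 ≤ u) (hα : 0 ≤ α) :
    (1 ≤ sdR (bh m α) (leadVec m u) ∧
      leadVec m u ⟨0, hm⟩ ≤ orderStat (leadVec m u) (sdR (bh m α) (leadVec m u))) ↔ u ≤ α := by
  rw [leadVec_zero hm]
  refine ⟨fun ⟨hR, h⟩ => ?_, fun h => ?_⟩
  · by_contra! hαu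
    rw [orderStat_leadVec_of_lt hu hR (sdR_lt_self hm ?_)] at h
    · linarith
    · rwa [orderStat_leadVec_self hm hu, bh_self hm]
  · rw [sdR_bh_leadVec hm hu hα h, orderStat_leadVec_self hm hu]
    exact ⟨hm, le_rfl⟩

end BHLeadVec

section Uniform

variable {Ω : Type*} [MeasurableSpace Ω] {μ : Measure Ω} {U : Ω → ℝ} {α : ℝ}

lemma ae_nonneg_of_map_eq_unif01 (hU : Measurable U) (hUunif : μ.map U = unif01) :
    ∀ᵐ ω ∂μ, 0 ≤ U ω :=
  ae_of_ae_map hU.aemeasurable (p := fun x => 0 ≤ x) <| by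
    rw [hUunif]
    exact (ae_restrict_mem measurableSet_Icc).mono fun _ hx => hx.1

lemma unif01_real_Iic (hα0 : 0 ≤ α) (hα1 : α ≤ 1) : unif01.real (Set.Iic α) = α := by
  rw [unif01, measureReal_restrict_apply measurableSet_Iic,
    show Set.Iic α ∩ Set.Icc 0 1 = Set.Icc 0 α from Set.ext fun _ =>
      ⟨fun ⟨h, h0, _⟩ => ⟨h0, h⟩, fun ⟨h0, h⟩ => ⟨h, h0, h.trans hα1⟩⟩,
    Real.volume_real_Icc_of_le hα0, sub_zero]

lemma integral_indicator_Iic_comp (hU : Measurable U) (hUunif : μ.map U = unif01)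
    (hα0 : 0 ≤ α) (hα1 : α ≤ 1) (c : ℝ) :
    ∫ ω, (Set.Iic α).indicator (fun _ => c) (U ω) ∂μ = α * c := by
  rw [← integral_map hU.aemeasurable
      (aestronglyMeasurable_const.indicator measurableSet_Iic), hUunif,
    integral_indicator_const _ measurableSet_Iic, unif01_real_Iic hα0 hα1, smul_eq_mul]

end Uniform

lemma filter_val_eq_zero_eq_singleton {m : ℕ} (hm : 1 ≤ m) :
    univ.filter (fun i : Fin m => (i : ℕ) = 0) = {⟨0, hm⟩} := by
  ext i
  simp [Fin.ext_iff]

lemma FDR_leadVec {Ω : Type*} [MeasurableSpace Ω] {μ : Measure Ω} {U : Ω → ℝ} {m : ℕ} {α : ℝ}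
    (hU : Measurable U) (hUunif : μ.map U = unif01) (hm : 1 ≤ m) (hα0 : 0 ≤ α) (hα1 : α ≤ 1)
    {R : (Fin m → ℝ) → ℕ} {rej : (Fin m → ℝ) → Fin m → Prop}
    (hrej : ∀ u, 0 ≤ u → (rej (leadVec m u) ⟨0, hm⟩ ↔ u ≤ α))
    (hR : ∀ u, 0 ≤ u → u ≤ α → R (leadVec m u) = m) :
    FDR μ (fun ω => leadVec m (U ω)) (univ.filter fun i : Fin m => (i : ℕ) = 0) R rej = α / m := by
  have hfdp : ∀ u, 0 ≤ u →
      ((((univ.filter fun i : Fin m => (i : ℕ) = 0).filter (rej (leadVec m u))).card : ℝ) /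
        (max (R (leadVec m u)) 1 : ℕ)) = (Set.Iic α).indicator (fun _ => (m : ℝ)⁻¹) u := by
    intro u hu
    rw [filter_val_eq_zero_eq_singleton hm, filter_singleton]
    by_cases huα : u ≤ α
    · rw [if_pos ((hrej u hu).2 huα), hR u hu huα, Nat.max_eq_left hm,
        Set.indicator_of_mem (Set.mem_Iic.2 huα)]
      simp
    · rw [if_neg (mt (hrej u hu).1 huα), Set.indicator_of_notMem (mt Set.mem_Iic.1 huα)]
      simp
  unfold FDR
  rw [integral_congr_ae ((ae_nonneg_of_map_eq_unif01 hU hUunif).mono fun ω hω => hfdp _ hω),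
    integral_indicator_Iic_comp hU hUunif hα0 hα1, div_eq_mul_inv]

theorem bh_bound_attained_general
    {Ω : Type*} [MeasurableSpace Ω] (μ : Measure Ω)
    (m : ℕ) (hm : 1 ≤ m) (α : ℝ) (hα : α ∈ Set.Ioo (0:ℝ) 1)
    (U : Ω → ℝ) (hU : Measurable U) (hUunif : Measure.map U μ = unif01) :
    suFDR μ (bh m α) (fun ω i => if (i : ℕ) = 0 then U ω else 0)
        (Finset.univ.filter (fun i : Fin m => (i : ℕ) = 0)) = α / m ∧
    sdFDR μ (bh m α) (fun ω i => if (i : ℕ) = 0 then U ω else 0)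
        (Finset.univ.filter (fun i : Fin m => (i : ℕ) = 0)) = α / m := by
  obtain ⟨hα0, hα1⟩ := hα
  exact ⟨FDR_leadVec hU hUunif hm hα0.le hα1.le (fun _ hu => su_bh_rejects_leadVec_iff hm hu hα0.le)
      (fun _ hu => suR_bh_leadVec hm hu),
    FDR_leadVec hU hUunif hm hα0.le hα1.le (fun _ hu => sd_bh_rejects_leadVec_iff hm hu hα0.le)
      (fun _ hu => sdR_bh_leadVec hm hu hα0.le)⟩

/-- Sharpness of the bound `FDR ≤ m₀α/m`: for
`p = (U, 0, …, 0)` with `U` uniform on `[0,1]`, `m₀ = 1`, `I₀ = {1}`, both the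
step-up and the step-down BH tests have `FDR = P(U ≤ α)/m = α/m`. -/
theorem bh_bound_attained
    {Ω : Type*} [MeasurableSpace Ω] (μ : Measure Ω) [IsProbabilityMeasure μ]
    (m : ℕ) (hm : 1 ≤ m) (α : ℝ) (hα : α ∈ Set.Ioo (0:ℝ) 1)
    (U : Ω → ℝ) (hU : Measurable U) (hUunif : Measure.map U μ = unif01) :
    suFDR μ (bh m α) (fun ω i => if (i : ℕ) = 0 then U ω else 0)
        (Finset.univ.filter (fun i : Fin m => (i : ℕ) = 0)) = α / m ∧
    sdFDR μ (bh m α) (fun ω i => if (i : ℕ) = 0 then U ω else 0)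
        (Finset.univ.filter (fun i : Fin m => (i : ℕ) = 0)) = α / m :=
  bh_bound_attained_general μ m hm α hα U hU hUunif
end
end

section
/- The FDR of the Benjamini–Hochberg step-down test is not monotone in the false-null p-values: with m = 2, m_0 = m_1 = 1, I_0 = {1}, p_1 and U i.i.d. uniform on [0,1], one has FDR(p_2 = αU) = 3α/8, FDR(p_2 = U) = α/2 − α²/8, FDR(p_2 = 0) = α/2, and FDR(p_2 = (1−α)U + α) = α/2; hence FDR(p_2 = αU) < FDR(p_2 = U) < FDR(p_2 = (1−α)U+α) while FDR(p_2 = 0) > FDR(p_2 = αU), even though 0 ≤ αU ≤ U ≤ (1−α)U+α pointwise. -/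
open MeasureTheory ProbabilityTheory Finset
open scoped Classical
noncomputable section

/-!
Since `p₁` is uniform and independent of `p₂`, the step-down FDR equals
`α/2 - (α/4)·P(α/2 < p₂ ≤ α)`. Indeed, the false discovery proportion is
`1{p₁ ≤ α/2} - ½·1{p₁ ≤ α/2, p₂ ≤ α} + ½·1{α/2 < p₁ ≤ α, p₂ ≤ α/2}`, and both intervals for `p₁`
have probability `α/2`, so the last two terms combine into `-(α/4)·P(α/2 < p₂ ≤ α)`.
The four choices `αU`, `U`, `0`, `(1-α)U+α` of `p₂` put mass `1/2`, `α/2`, `0`, `0` on `(α/2, α]`.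
-/

open Set

lemma orderStat_eq_of_forall {m : ℕ} {p : Fin m → ℝ} {i : ℕ} {x : ℝ}
    (h : ∀ t, i ≤ countLE p t ↔ x ≤ t) : orderStat p i = x := by
  rw [orderStat, show {t | i ≤ countLE p t} = Ici x from Set.ext h, csInf_Ici]

lemma countLE_fin_two (a b t : ℝ) :
    countLE ![a, b] t = (if a ≤ t then 1 else 0) + (if b ≤ t then 1 else 0) := by
  rw [countLE, Finset.card_filter, Fin.sum_univ_two]
  rfl

lemma orderStat_fin_two_one (a b : ℝ) : orderStat ![a, b] 1 = min a b :=
  orderStat_eq_of_forall fun t => by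
    rw [countLE_fin_two, min_le_iff]
    split_ifs <;> simp_all

lemma orderStat_fin_two_two (a b : ℝ) : orderStat ![a, b] 2 = max a b :=
  orderStat_eq_of_forall fun t => by
    rw [countLE_fin_two, max_le_iff]
    split_ifs <;> simp_all

lemma sdR_fin_two (α : ℕ → ℝ) (p : Fin 2 → ℝ) :
    sdR α p = if orderStat p 1 ≤ α 1 then if orderStat p 2 ≤ α 2 then 2 else 1 else 0 := by
  have h3 : Finset.range 3 = {0, 1, 2} := rfl
  have h1 : Finset.Icc 1 1 = {1} := rfl
  have h2 : Finset.Icc 1 2 = {1, 2} := rfl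
  simp only [sdR, h3, h1, h2, Finset.filter_insert, Finset.filter_singleton,
    Finset.forall_mem_insert, Finset.mem_singleton, forall_eq]
  by_cases hp1 : orderStat p 1 ≤ α 1 <;> by_cases hp2 : orderStat p 2 ≤ α 2 <;>
    simp [hp1, hp2]

lemma sdR_bh_two (α a b : ℝ) :
    sdR (bh 2 α) ![a, b] = if min a b ≤ α / 2 then if max a b ≤ α then 2 else 1 else 0 := by
  rw [sdR_fin_two, orderStat_fin_two_one, orderStat_fin_two_two]
  norm_num [bh]

lemma sdFDR_singleton {Ω : Type*} [MeasurableSpace Ω] (μ : Measure Ω) {m : ℕ} (α : ℕ → ℝ)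
    (p : Ω → Fin m → ℝ) (i : Fin m) :
    sdFDR μ α p {i}
      = ∫ ω, (if 1 ≤ sdR α (p ω) ∧ p ω i ≤ orderStat (p ω) (sdR α (p ω)) then (1 : ℝ) else 0)
          / ((max (sdR α (p ω)) 1 : ℕ) : ℝ) ∂μ := by
  simp only [sdFDR, FDR, Finset.filter_singleton]
  congr with ω
  split_ifs <;> simp

lemma sdFDP_bh_two {α : ℝ} (hα : 0 ≤ α) (a b : ℝ) :
    (if 1 ≤ sdR (bh 2 α) ![a, b] ∧ ![a, b] 0 ≤ orderStat ![a, b] (sdR (bh 2 α) ![a, b])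
      then (1 : ℝ) else 0) / ((max (sdR (bh 2 α) ![a, b]) 1 : ℕ) : ℝ)
    = (Iic (α / 2)).indicator 1 a - (Iic (α / 2)).indicator 1 a * (Iic α).indicator 1 b / 2
      + (Ioc (α / 2) α).indicator 1 a * (Iic (α / 2)).indicator 1 b / 2 := by
  -- `R = 2` gives FDP `1/2`; `R = 1` rejects `H₁` iff `a ≤ b`, i.e. iff `a ≤ α/2 < α < b`.
  rw [sdR_bh_two]
  simp only [Set.indicator, Set.mem_Iic, Set.mem_Ioc, Pi.one_apply]
  split_ifs <;> simp_all [orderStat_fin_two_one, orderStat_fin_two_two] <;> grind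

section Indicator

variable {Ω : Type*} [MeasurableSpace Ω] {μ : Measure Ω} {X Y : Ω → ℝ} {s t : Set ℝ}

lemma integrable_indicator_one_comp [IsFiniteMeasure μ] (hX : Measurable X)
    (hs : MeasurableSet s) : Integrable (fun ω => s.indicator (1 : ℝ → ℝ) (X ω)) μ :=
  ((integrable_const (1 : ℝ)).indicator (hX hs)).congr
    (Filter.Eventually.of_forall fun _ => (Set.indicator_comp_right X (s := s) (g := 1)).symm)

lemma integrable_indicator_one_comp_mul [IsFiniteMeasure μ] (hX : Measurable X)
    (hY : Measurable Y) (hs : MeasurableSet s) (ht : MeasurableSet t) :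
    Integrable (fun ω => s.indicator (1 : ℝ → ℝ) (X ω) * t.indicator 1 (Y ω)) μ :=
  (integrable_indicator_one_comp hY ht).bdd_mul (c := 1)
    ((measurable_one.indicator hs).comp hX).aestronglyMeasurable
    (ae_of_all _ fun _ => (norm_indicator_le_norm_self _ _).trans (by simp))

lemma integral_indicator_one_comp (hX : Measurable X) (hs : MeasurableSet s) :
    ∫ ω, s.indicator (1 : ℝ → ℝ) (X ω) ∂μ = (μ.map X).real s := by
  rw [← integral_map hX.aemeasurable (by fun_prop), integral_indicator_one hs]

lemma ProbabilityTheory.IndepFun.integral_indicator_one_comp_mul (hXY : IndepFun X Y μ)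
    (hX : Measurable X) (hY : Measurable Y) (hs : MeasurableSet s) (ht : MeasurableSet t) :
    ∫ ω, s.indicator (1 : ℝ → ℝ) (X ω) * t.indicator 1 (Y ω) ∂μ
      = (μ.map X).real s * (μ.map Y).real t := by
  rw [hXY.integral_fun_comp_mul_comp hX.aemeasurable hY.aemeasurable (by fun_prop)
    (by fun_prop), integral_indicator_one_comp hX hs, integral_indicator_one_comp hY ht]

end Indicator

lemma unif01_real_Iic_s13 {t : ℝ} (h0 : 0 ≤ t) (h1 : t ≤ 1) : unif01.real (Iic t) = t := by
  have : Iic t ∩ Icc 0 1 = Icc 0 t := by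
    ext x
    simp only [mem_inter_iff, Set.mem_Iic, Set.mem_Icc]
    exact ⟨fun ⟨hxt, hx0, _⟩ => ⟨hx0, hxt⟩, fun ⟨hx0, hxt⟩ => ⟨hxt, hx0, hxt.trans h1⟩⟩
  rw [unif01, measureReal_restrict_apply measurableSet_Iic, this, Real.volume_real_Icc_of_le h0,
    sub_zero]

lemma unif01_real_Ioc {a b : ℝ} (h0 : 0 ≤ a) (hab : a ≤ b) (h1 : b ≤ 1) :
    unif01.real (Ioc a b) = b - a := by
  rw [unif01, measureReal_restrict_apply measurableSet_Ioc,
    inter_eq_left.mpr (Ioc_subset_Icc_self.trans (Icc_subset_Icc h0 h1)),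
    Real.volume_real_Ioc_of_le hab]

theorem sdFDR_bh_two_of_indepFun {Ω : Type*} [MeasurableSpace Ω] {μ : Measure Ω}
    [IsFiniteMeasure μ] {α : ℝ} (hα0 : 0 ≤ α) (hα1 : α ≤ 1) {p1 p2 : Ω → ℝ}
    (hp1 : Measurable p1) (hp2 : Measurable p2) (hp1unif : μ.map p1 = unif01)
    (hind : IndepFun p1 p2 μ) :
    sdFDR μ (bh 2 α) (fun ω => ![p1 ω, p2 ω]) {0}
      = α / 2 - α / 4 * μ.real (p2 ⁻¹' Ioc (α / 2) α) := by
  have hS : Integrable (fun ω => (Iic (α / 2)).indicator (1 : ℝ → ℝ) (p1 ω)) μ :=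
    integrable_indicator_one_comp hp1 measurableSet_Iic
  have hSG := (integrable_indicator_one_comp_mul (μ := μ) hp1 hp2
    (measurableSet_Iic (a := α / 2)) (measurableSet_Iic (a := α))).div_const 2
  have hTG := (integrable_indicator_one_comp_mul (μ := μ) hp1 hp2
    (measurableSet_Ioc (a := α / 2) (b := α)) (measurableSet_Iic (a := α / 2))).div_const 2
  have hsplit : μ.real (p2 ⁻¹' Iic α)
      = μ.real (p2 ⁻¹' Iic (α / 2)) + μ.real (p2 ⁻¹' Ioc (α / 2) α) := by
    rw [← measureReal_union ((Set.Iic_disjoint_Ioc le_rfl).preimage p2)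
      (hp2 measurableSet_Ioc), ← preimage_union, Set.Iic_union_Ioc_eq_Iic (by linarith)]
  simp only [sdFDR_singleton, sdFDP_bh_two hα0]
  rw [integral_add (by exact hS.sub hSG) hTG, integral_sub hS hSG, integral_div, integral_div,
    hind.integral_indicator_one_comp_mul hp1 hp2 measurableSet_Iic measurableSet_Iic,
    hind.integral_indicator_one_comp_mul hp1 hp2 measurableSet_Ioc measurableSet_Iic,
    integral_indicator_one_comp hp1 measurableSet_Iic, hp1unif,
    unif01_real_Iic_s13 (by linarith) (by linarith), unif01_real_Ioc (by linarith) (by linarith) hα1,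
    map_measureReal_apply hp2 measurableSet_Iic, map_measureReal_apply hp2 measurableSet_Iic,
    hsplit]
  ring

section Cases

variable {Ω : Type*} [MeasurableSpace Ω] {μ : Measure Ω} {α : ℝ} {U : Ω → ℝ}

lemma measureReal_preimage_of_map_eq {ν : Measure ℝ} (hU : Measurable U) (hUν : μ.map U = ν)
    {s : Set ℝ} (hs : MeasurableSet s) : μ.real (U ⁻¹' s) = ν.real s := by
  rw [← map_measureReal_apply hU hs, hUν]

lemma measureReal_const_mul_preimage_Ioc (hα : 0 < α) (hU : Measurable U)
    (hUunif : μ.map U = unif01) :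
    μ.real ((fun ω => α * U ω) ⁻¹' Ioc (α / 2) α) = 1 / 2 := by
  change μ.real (U ⁻¹' ((α * ·) ⁻¹' Ioc (α / 2) α)) = 1 / 2
  rw [preimage_const_mul_Ioc₀ _ _ hα, div_div_cancel_left' hα.ne', div_self hα.ne',
    measureReal_preimage_of_map_eq hU hUunif measurableSet_Ioc,
    unif01_real_Ioc (by norm_num) (by norm_num) le_rfl]
  norm_num

lemma measureReal_affine_preimage_Ioc [IsFiniteMeasure μ] (hα1 : α < 1) (hU : Measurable U)
    (hUunif : μ.map U = unif01) :
    μ.real ((fun ω => (1 - α) * U ω + α) ⁻¹' Ioc (α / 2) α) = 0 := by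
  have hsub : (fun ω => (1 - α) * U ω + α) ⁻¹' Ioc (α / 2) α ⊆ U ⁻¹' Iic 0 :=
    fun ω hω => by
      have : (1 - α) * U ω ≤ 0 := by linarith [hω.2]
      exact nonpos_of_mul_nonpos_right this (by linarith)
  refine le_antisymm ?_ measureReal_nonneg
  calc _ ≤ μ.real (U ⁻¹' Iic 0) := measureReal_mono hsub
    _ = 0 := by rw [measureReal_preimage_of_map_eq hU hUunif measurableSet_Iic,
        unif01_real_Iic_s13 le_rfl zero_le_one]

end Cases

/-- The FDR of the BH step-down test is not monotone in the
false-null p-value: with `m = 2`, `I₀ = {1}`, `p₁, U` i.i.d. uniform on `[0,1]`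
and `p₂ ∈ {0, αU, U, (1-α)U+α}`, the FDR values are
`α/2, 3α/8, α/2 - α²/8, α/2` respectively, so
`FDR(αU) < FDR(U) < FDR((1-α)U+α)` while `FDR(0) > FDR(αU)`. -/
theorem sd_fdr_not_monotone
    {Ω : Type*} [MeasurableSpace Ω] (μ : Measure Ω) [IsProbabilityMeasure μ]
    (α : ℝ) (hα : α ∈ Set.Ioo (0:ℝ) 1)
    (p1 U : Ω → ℝ) (hp1 : Measurable p1) (hU : Measurable U)
    (hp1unif : Measure.map p1 μ = unif01) (hUunif : Measure.map U μ = unif01)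
    (hindep : IndepFun p1 U μ) :
    sdFDR μ (bh 2 α) (fun ω => ![p1 ω, α * U ω]) {0} = 3 * α / 8 ∧
    sdFDR μ (bh 2 α) (fun ω => ![p1 ω, U ω]) {0} = α / 2 - α ^ 2 / 8 ∧
    sdFDR μ (bh 2 α) (fun ω => ![p1 ω, 0]) {0} = α / 2 ∧
    sdFDR μ (bh 2 α) (fun ω => ![p1 ω, (1 - α) * U ω + α]) {0} = α / 2 ∧
    sdFDR μ (bh 2 α) (fun ω => ![p1 ω, α * U ω]) {0}
      < sdFDR μ (bh 2 α) (fun ω => ![p1 ω, U ω]) {0} ∧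
    sdFDR μ (bh 2 α) (fun ω => ![p1 ω, U ω]) {0}
      < sdFDR μ (bh 2 α) (fun ω => ![p1 ω, (1 - α) * U ω + α]) {0} ∧
    sdFDR μ (bh 2 α) (fun ω => ![p1 ω, α * U ω]) {0}
      < sdFDR μ (bh 2 α) (fun ω => ![p1 ω, 0]) {0} := by
  obtain ⟨hα0, hα1⟩ := hα
  have fdr_of_fun (f : ℝ → ℝ) (hf : Measurable f) :
      sdFDR μ (bh 2 α) (fun ω => ![p1 ω, f (U ω)]) {0}
        = α / 2 - α / 4 * μ.real ((fun ω => f (U ω)) ⁻¹' Ioc (α / 2) α) :=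
    sdFDR_bh_two_of_indepFun hα0.le hα1.le hp1 (hf.comp hU) hp1unif (hindep.comp measurable_id hf)
  have h1 : sdFDR μ (bh 2 α) (fun ω => ![p1 ω, α * U ω]) {0} = 3 * α / 8 := by
    rw [fdr_of_fun (α * ·) (by fun_prop), measureReal_const_mul_preimage_Ioc hα0 hU hUunif]
    ring
  have h2 : sdFDR μ (bh 2 α) (fun ω => ![p1 ω, U ω]) {0} = α / 2 - α ^ 2 / 8 := by
    rw [fdr_of_fun (fun u => u) measurable_id,
      measureReal_preimage_of_map_eq hU hUunif measurableSet_Ioc,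
      unif01_real_Ioc (by linarith) (by linarith) hα1.le]
    ring
  have h3 : sdFDR μ (bh 2 α) (fun ω => ![p1 ω, 0]) {0} = α / 2 := by
    have hempty : (fun _ : Ω => (0 : ℝ)) ⁻¹' Ioc (α / 2) α = ∅ :=
      preimage_const_of_notMem fun h => by linarith [h.1]
    rw [fdr_of_fun (fun _ => 0) measurable_const, hempty, measureReal_empty, mul_zero, sub_zero]
  have h4 : sdFDR μ (bh 2 α) (fun ω => ![p1 ω, (1 - α) * U ω + α]) {0} = α / 2 := by
    rw [fdr_of_fun (fun u => (1 - α) * u + α) (by fun_prop),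
      measureReal_affine_preimage_Ioc hα1 hU hUunif, mul_zero, sub_zero]
  refine ⟨h1, h2, h3, h4, ?_, ?_, ?_⟩
  · rw [h1, h2]; nlinarith
  · rw [h2, h4]; nlinarith
  · rw [h1, h3]; linarith
end
end
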